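/- Let t be a positive integer and G a flower group of type (c₀; c₁, …, c_k). For 0 ≤ i ≤ k write c_i = ν_i·ω_i where ω_i is the greatest divisor of c_i that is relatively prime to t. Then the number of elements g ∈ G such that g^(t^m) = 1 for some integer m ≥ 0 equals ν₁ + ν₂ + ⋯ + ν_k − (k−1)·ν₀. -/

import Mathlib

/-- A cyclic subgroup `C` of `G` is a μ-subgroup if it is not contained in any cyclic
subgroup of `G` other than `C` itself. -/
def IsMuSubgroup {G : Type*} [Group G] (C : Subgroup G) : Prop :=
  IsCyclic ↥C ∧ ∀ K : Subgroup G, IsCyclic ↥K → C ≤ K → C = K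

/-- A noncyclic group `G` is a flower group with pistil `C0` if any two distinct
μ-subgroups of `G` intersect exactly in `C0`. -/
def IsFlowerGroup {G : Type*} [Group G] (C0 : Subgroup G) : Prop :=
  ¬ IsCyclic G ∧
    ∀ C C' : Subgroup G, IsMuSubgroup C → IsMuSubgroup C' → C ≠ C' → C ⊓ C' = C0

/-!
Every element of a finite group lies in a μ-subgroup, so the set of elements killed by some
power of `t` is the union of its traces on the petals, and any two of these traces meet in the
trace on the pistil. For such a "sunflower" of finite sets `A₁, …, A_k` with common pairwise
intersection `B`, inclusion–exclusion collapses to `|⋃ Aᵢ| + (k - 1)|B| = Σ |Aᵢ|`.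
In a cyclic group of order `ν·ω`, with `ω` the largest divisor coprime to `t`, the elements
killed by a power of `t` are those killed by `ν` (every prime of `ν` divides `t`), and there are
exactly `ν` of them.
-/

open Finset

theorem Finset.card_biUnion_add_mul_of_pairwise_inter_eq {ι α : Type*} [DecidableEq ι]
    [DecidableEq α] {s : Finset ι} {A : ι → Finset α} {B : Finset α}
    (hAB : ∀ i ∈ s, ∀ j ∈ s, i ≠ j → A i ∩ A j = B) :
    #(s.biUnion A) + (#s - 1) * #B = ∑ i ∈ s, #(A i) := by
  induction s using Finset.induction_on with
  | empty => simp
  | insert j s hj ih =>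
    rcases s.eq_empty_or_nonempty with rfl | ⟨i, hi⟩
    · simp
    have hAB' : ∀ i ∈ s, ∀ j ∈ s, i ≠ j → A i ∩ A j = B := fun i hi j hj =>
      hAB i (mem_insert_of_mem hi) j (mem_insert_of_mem hj)
    have hinter : A j ∩ s.biUnion A = B := by
      ext x
      simp only [mem_inter, mem_biUnion]
      constructor
      · rintro ⟨hxj, l, hl, hxl⟩
        rw [← hAB j (mem_insert_self j s) l (mem_insert_of_mem hl) (by rintro rfl; exact hj hl)]
        exact mem_inter.2 ⟨hxj, hxl⟩
      · intro hx
        rw [← hAB j (mem_insert_self j s) i (mem_insert_of_mem hi) (by rintro rfl; exact hj hi),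
          mem_inter] at hx
        exact ⟨hx.1, i, hi, hx.2⟩
    have hunion := card_union_add_card_inter (A j) (s.biUnion A)
    obtain ⟨r, hr⟩ := Nat.exists_eq_add_one_of_ne_zero (card_pos.2 ⟨i, hi⟩).ne'
    rw [hinter] at hunion
    rw [biUnion_insert, sum_insert hj, card_insert_of_notMem hj, ← ih hAB', hr]
    simp only [Nat.add_sub_cancel]
    linarith

theorem Nat.exists_dvd_pow_of_maximal_coprime_dvd {t n w : ℕ} (hnw : n * w ≠ 0)
    (hw : w.Coprime t) (hmax : ∀ d, d ∣ n * w → d.Coprime t → d ≤ w) : ∃ m, n ∣ t ^ m := by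
  rcases eq_or_ne t 0 with rfl | ht
  · exact ⟨1, by simp⟩
  rw [Nat.exists_dvd_pow_iff (left_ne_zero_of_mul hnw) ht]
  intro p hp
  rw [Nat.mem_primeFactors] at hp ⊢
  refine ⟨hp.1, ?_, ht⟩
  by_contra hpt
  -- otherwise `p * w` would be a larger divisor coprime to `t`
  have hle := hmax (p * w) (mul_dvd_mul_right hp.2.1 w)
    (Nat.Coprime.mul_left ((Nat.Prime.coprime_iff_not_dvd hp.1).2 hpt) hw)
  have hw0 : 0 < w := Nat.pos_of_ne_zero (right_ne_zero_of_mul hnw)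
  nlinarith [hp.1.two_le]

theorem exists_pow_pow_eq_one_iff_pow_eq_one {H : Type*} [Group H] [Finite H] {t n w : ℕ}
    (hcard : Nat.card H = n * w) (hw : w.Coprime t)
    (hmax : ∀ d, d ∣ Nat.card H → d.Coprime t → d ≤ w) (x : H) :
    (∃ m, x ^ t ^ m = 1) ↔ x ^ n = 1 := by
  constructor
  · rintro ⟨m, hm⟩
    have hcop : (orderOf x).Coprime w :=
      ((hw.pow_right m).coprime_dvd_right (orderOf_dvd_of_pow_eq_one hm)).symm
    exact orderOf_dvd_iff_pow_eq_one.1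
      (hcop.dvd_of_dvd_mul_right (hcard ▸ orderOf_dvd_natCard x))
  · intro hx
    obtain ⟨m, s, hs⟩ := Nat.exists_dvd_pow_of_maximal_coprime_dvd
      (hcard ▸ Nat.card_pos.ne') hw (hcard ▸ hmax)
    exact ⟨m, by rw [hs, pow_mul, hx, one_pow]⟩

theorem IsCyclic.card_exists_pow_pow_eq_one {H : Type*} [Group H] [Finite H] [IsCyclic H]
    {t n w : ℕ} (hcard : Nat.card H = n * w) (hw : w.Coprime t)
    (hmax : ∀ d, d ∣ Nat.card H → d.Coprime t → d ≤ w) :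
    Nat.card {x : H // ∃ m, x ^ t ^ m = 1} = n := by
  let := IsCyclic.commGroup (α := H)
  calc Nat.card {x : H // ∃ m, x ^ t ^ m = 1}
      = Nat.card (powMonoidHom n : H →* H).ker :=
        Nat.card_congr <| Equiv.subtypeEquivRight fun x =>
          exists_pow_pow_eq_one_iff_pow_eq_one hcard hw hmax x
    _ = n := by
        rw [IsCyclic.card_powMonoidHom_ker, hcard, Nat.gcd_eq_right (dvd_mul_right n w)]

theorem Subgroup.card_mem_and_exists_pow_pow_eq_one {G : Type*} [Group G] (K : Subgroup G)
    [Finite K] [IsCyclic K] {t n w : ℕ} (hcard : Nat.card K = n * w) (hw : w.Coprime t)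
    (hmax : ∀ d, d ∣ Nat.card K → d.Coprime t → d ≤ w) :
    Nat.card {g : G // g ∈ K ∧ ∃ m, g ^ t ^ m = 1} = n := by
  rw [← IsCyclic.card_exists_pow_pow_eq_one hcard hw hmax]
  refine Nat.card_congr <| (Equiv.subtypeSubtypeEquivSubtypeInter _ _).symm.trans <|
    Equiv.subtypeEquivRight fun x => ?_
  simp only [← Subgroup.coe_pow, OneMemClass.coe_eq_one]

theorem exists_isMuSubgroup_mem {G : Type*} [Group G] [Finite G] (g : G) :
    ∃ C : Subgroup G, IsMuSubgroup C ∧ g ∈ C := by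
  obtain ⟨C, hgC, hC⟩ :=
    Finite.exists_le_maximal (p := fun K : Subgroup G => IsCyclic K) (Subgroup.isCyclic_zpowers g)
  exact ⟨C, ⟨hC.prop, fun K hK hCK => le_antisymm hCK (hC.le_of_ge hK hCK)⟩,
    hgC (Subgroup.mem_zpowers g)⟩

theorem IsFlowerGroup.isCyclic_pistil {G : Type*} [Group G] [Finite G] {C0 : Subgroup G}
    (hG : IsFlowerGroup C0) : IsCyclic C0 := by
  obtain ⟨C, hC, -⟩ := exists_isMuSubgroup_mem (1 : G)
  have := hC.1
  obtain ⟨g, hg⟩ : ∃ g, g ∉ C := by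
    by_contra! hall
    exact hG.1 (isCyclic_of_surjective C.subtype fun g => ⟨⟨g, hall g⟩, rfl⟩)
  obtain ⟨C', hC', hgC'⟩ := exists_isMuSubgroup_mem g
  rw [← hG.2 C C' hC hC' (by rintro rfl; exact hg hgC')]
  exact Subgroup.isCyclic_of_le inf_le_left

theorem stmt15_general (t : ℕ) {G : Type*} [Group G] [Finite G]
    (C0 : Subgroup G) (hG : IsFlowerGroup C0)
    (k : ℕ) (P : Fin k → Subgroup G) (hinj : Function.Injective P)
    (hpetals : ∀ C : Subgroup G, IsMuSubgroup C ↔ ∃ i, C = P i)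
    (ν0 ω0 : ℕ) (ν ω : Fin k → ℕ)
    (hfac0 : Nat.card C0 = ν0 * ω0) (hω0cop : Nat.Coprime ω0 t)
    (hω0max : ∀ d : ℕ, d ∣ Nat.card C0 → Nat.Coprime d t → d ≤ ω0)
    (hfac : ∀ i, Nat.card (P i) = ν i * ω i) (hωcop : ∀ i, Nat.Coprime (ω i) t)
    (hωmax : ∀ i, ∀ d : ℕ, d ∣ Nat.card (P i) → Nat.Coprime d t → d ≤ ω i) :
    Nat.card {g : G // ∃ m : ℕ, g ^ t ^ m = 1} + (k - 1) * ν0 = ∑ i, ν i := by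
  classical
  have := Fintype.ofFinite G
  have hP : ∀ i, IsMuSubgroup (P i) := fun i => (hpetals (P i)).2 ⟨i, rfl⟩
  set A : Fin k → Finset G := fun i => {g | g ∈ P i ∧ ∃ m : ℕ, g ^ t ^ m = 1}
  set B : Finset G := {g | g ∈ C0 ∧ ∃ m : ℕ, g ^ t ^ m = 1}
  have hA : ∀ i, #(A i) = ν i := fun i => by
    have := (hP i).1
    rw [← (P i).card_mem_and_exists_pow_pow_eq_one (hfac i) (hωcop i) (hωmax i),
      Nat.card_eq_fintype_card, Fintype.card_subtype]
  have hB : #B = ν0 := by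
    have := hG.isCyclic_pistil
    rw [← C0.card_mem_and_exists_pow_pow_eq_one hfac0 hω0cop hω0max,
      Nat.card_eq_fintype_card, Fintype.card_subtype]
  have hunion : univ.biUnion A = ({g | ∃ m : ℕ, g ^ t ^ m = 1} : Finset G) := by
    ext g
    simp only [A, mem_biUnion, mem_univ, mem_filter, true_and]
    refine ⟨fun ⟨_, _, hg⟩ => hg, fun hg => ?_⟩
    obtain ⟨C, hC, hgC⟩ := exists_isMuSubgroup_mem g
    obtain ⟨i, rfl⟩ := (hpetals C).1 hC
    exact ⟨i, hgC, hg⟩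
  have hinter : ∀ i ∈ univ, ∀ j ∈ univ, i ≠ j → A i ∩ A j = B := fun i _ j _ hij => by
    ext g
    simp only [A, B, mem_inter, mem_filter, mem_univ, true_and,
      ← hG.2 (P i) (P j) (hP i) (hP j) (hinj.ne hij), Subgroup.mem_inf]
    tauto
  have key := card_biUnion_add_mul_of_pairwise_inter_eq hinter
  simp only [hunion, card_univ, Fintype.card_fin, hB, hA] at key
  rwa [Nat.card_eq_fintype_card, Fintype.card_subtype]

/-- If G is a flower group of type (c₀; c₁, …, c_k), c_i = ν_i·ω_i with ω_i
the greatest divisor of c_i coprime to t, then the number of elements g ∈ G such that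
g^(t^m) = 1 for some m ≥ 0 equals ν₁ + ⋯ + ν_k − (k−1)·ν₀. -/
theorem stmt15 (t : ℕ) (ht : 0 < t) {G : Type*} [Group G] [Finite G]
    (C0 : Subgroup G) (hG : IsFlowerGroup C0)
    (k : ℕ) (P : Fin k → Subgroup G) (hinj : Function.Injective P)
    (hpetals : ∀ C : Subgroup G, IsMuSubgroup C ↔ ∃ i, C = P i)
    (ν0 ω0 : ℕ) (ν ω : Fin k → ℕ)
    (hfac0 : Nat.card C0 = ν0 * ω0) (hω0cop : Nat.Coprime ω0 t)
    (hω0max : ∀ d : ℕ, d ∣ Nat.card C0 → Nat.Coprime d t → d ≤ ω0)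
    (hfac : ∀ i, Nat.card (P i) = ν i * ω i) (hωcop : ∀ i, Nat.Coprime (ω i) t)
    (hωmax : ∀ i, ∀ d : ℕ, d ∣ Nat.card (P i) → Nat.Coprime d t → d ≤ ω i) :
    Nat.card {g : G // ∃ m : ℕ, g ^ t ^ m = 1} + (k - 1) * ν0 = ∑ i, ν i :=
  stmt15_general t C0 hG k P hinj hpetals ν0 ω0 ν ω hfac0 hω0cop hω0max hfac hωcop hωmax
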